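/- arXiv:1503.08082 — 2 statements merged into one kernel-verified Lean document; each statement's English description precedes it below -/
import Mathlib

section
/- Let y > 0 and k ∈ ℝ. Then there exist constants C₀ > 0 and τ₀ > 0 such that for all τ > τ₀: | (1 - BS(k, y, τ)) · (√(2πτy)/4) · exp(yτ/8 - k/2) - 1 | ≤ C₀/τ. Equivalently, BS(k, y, τ) = 1 - (4/√(2πτy))·exp(-yτ/8 + k/2)·(1 + O(1/τ)) as τ → ∞. -/
/-!
Put `s = √(yτ)` and `a, b = s/2 ∓ k/s`. Then `1 - BS = (Ψ(a) + eᵏ Ψ(b)) / √(2π)` with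
`Ψ(x) = ∫ₓ^∞ e^{-t²/2} dt`, and the prefactor `e^{s²/8 - k/2}` turns both `e^{-a²/2}` and
`eᵏ e^{-b²/2}` into the same factor `e^{-k²/(2s²)} = 1 + O(1/s²)`. What is left is
`(s/4)(m(a) + m(b))` for the Mills ratio `m(x) = e^{x²/2} Ψ(x)`. Integrating `t e^{-t²/2}` and
`(e^{-t²/2}/t)'` over `(x, ∞)` gives `1/x - 1/x³ ≤ m(x) ≤ 1/x`, and
`(s/4)(1/a + 1/b) = s⁴/(s⁴ - 4k²) = 1 + O(1/s²)`, so the whole expression is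
`1 + O(1/s²) = 1 + O(1/τ)`.
-/

/-- The standard normal cumulative distribution function. -/
noncomputable def Phi (x : ℝ) : ℝ :=
  ∫ s in Set.Iic x, Real.exp (-(s ^ 2) / 2) / Real.sqrt (2 * Real.pi)

/-- The Black–Scholes call price. -/
noncomputable def BS (k w T : ℝ) : ℝ :=
  Phi (-k / Real.sqrt (w * T) + Real.sqrt (w * T) / 2)
    - Real.exp k * Phi (-k / Real.sqrt (w * T) - Real.sqrt (w * T) / 2)

open MeasureTheory Real Set Filter

noncomputable def gaussTail (x : ℝ) : ℝ := ∫ t in Ioi x, exp (-(t ^ 2) / 2)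

noncomputable def millsRatio (x : ℝ) : ℝ := exp (x ^ 2 / 2) * gaussTail x

lemma gaussTail_eq_mul_millsRatio (x : ℝ) :
    gaussTail x = exp (-(x ^ 2) / 2) * millsRatio x := by
  rw [millsRatio, ← mul_assoc, ← exp_add, neg_div, neg_add_cancel, exp_zero, one_mul]

lemma integrable_exp_neg_sq_div_two : Integrable fun t : ℝ => exp (-(t ^ 2) / 2) := by
  convert integrable_exp_neg_mul_sq (by norm_num : (0 : ℝ) < 1 / 2) using 2 with t
  ring_nf

lemma integral_exp_neg_sq_div_two : ∫ t, exp (-(t ^ 2) / 2) = √(2 * π) := by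
  convert integral_gaussian (1 / 2) using 2 <;> ring_nf

lemma Phi_eq_one_sub_gaussTail (x : ℝ) : Phi x = 1 - gaussTail x / √(2 * π) := by
  have hsplit := intervalIntegral.integral_Iic_add_Ioi (b := x)
    integrable_exp_neg_sq_div_two.integrableOn integrable_exp_neg_sq_div_two.integrableOn
  rw [integral_exp_neg_sq_div_two] at hsplit
  have hpos : 0 < √(2 * π) := by positivity
  rw [Phi, integral_div, gaussTail, eq_sub_iff_add_eq, ← add_div, hsplit, div_self hpos.ne']

lemma Phi_neg (x : ℝ) : Phi (-x) = gaussTail x / √(2 * π) := by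
  rw [Phi, integral_div, gaussTail, ← neg_neg x, ← integral_comp_neg_Iic, neg_neg]
  simp only [even_two, Even.neg_pow]

lemma one_sub_BS (k w T : ℝ) :
    1 - BS k w T = (gaussTail (√(w * T) / 2 - k / √(w * T))
      + exp k * gaussTail (√(w * T) / 2 + k / √(w * T))) / √(2 * π) := by
  have h₁ : -k / √(w * T) + √(w * T) / 2 = √(w * T) / 2 - k / √(w * T) := by ring
  have h₂ : -k / √(w * T) - √(w * T) / 2 = -(√(w * T) / 2 + k / √(w * T)) := by ring
  rw [BS, h₁, h₂, Phi_neg, Phi_eq_one_sub_gaussTail]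
  ring

lemma hasDerivAt_neg_exp_neg_sq_div_two (t : ℝ) :
    HasDerivAt (fun t => -exp (-(t ^ 2) / 2)) (t * exp (-(t ^ 2) / 2)) t := by
  have h : HasDerivAt (fun t : ℝ => -(t ^ 2) / 2) (-t) t :=
    ((hasDerivAt_pow 2 t).fun_neg.div_const 2).congr_deriv (by ring)
  exact h.exp.fun_neg.congr_deriv (by ring)

lemma hasDerivAt_neg_exp_neg_sq_div_two_div {t : ℝ} (ht : t ≠ 0) :
    HasDerivAt (fun t => -exp (-(t ^ 2) / 2) / t)
      (exp (-(t ^ 2) / 2) + exp (-(t ^ 2) / 2) / t ^ 2) t :=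
  ((hasDerivAt_neg_exp_neg_sq_div_two t).fun_div (hasDerivAt_id' t) ht).congr_deriv
    (by field_simp; ring)

lemma tendsto_neg_exp_neg_sq_div_two :
    Tendsto (fun t : ℝ => -exp (-(t ^ 2) / 2)) atTop (nhds 0) := by
  rw [← neg_zero]
  refine (tendsto_exp_atBot.comp ?_).neg
  exact (tendsto_neg_atBot_iff.mpr (tendsto_pow_atTop two_ne_zero)).atBot_div_const two_pos

section tail

variable {x : ℝ}

lemma integrableOn_Ioi_mul_exp_neg_sq_div_two (hx : 0 < x) :
    IntegrableOn (fun t => t * exp (-(t ^ 2) / 2)) (Ioi x) :=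
  integrableOn_Ioi_deriv_of_nonneg
    (hasDerivAt_neg_exp_neg_sq_div_two x).continuousAt.continuousWithinAt
    (fun t _ => hasDerivAt_neg_exp_neg_sq_div_two t)
    (fun _ ht => mul_nonneg (hx.trans ht).le (exp_pos _).le) tendsto_neg_exp_neg_sq_div_two

lemma integral_Ioi_mul_exp_neg_sq_div_two (hx : 0 < x) :
    ∫ t in Ioi x, t * exp (-(t ^ 2) / 2) = exp (-(x ^ 2) / 2) := by
  rw [integral_Ioi_of_hasDerivAt_of_nonneg
    (hasDerivAt_neg_exp_neg_sq_div_two x).continuousAt.continuousWithinAt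
    (fun t _ => hasDerivAt_neg_exp_neg_sq_div_two t)
    (fun _ ht => mul_nonneg (hx.trans ht).le (exp_pos _).le) tendsto_neg_exp_neg_sq_div_two,
    zero_sub, neg_neg]

lemma integrableOn_Ioi_exp_neg_sq_div_two_add_div_sq (hx : 0 < x) :
    IntegrableOn (fun t => exp (-(t ^ 2) / 2) + exp (-(t ^ 2) / 2) / t ^ 2) (Ioi x) :=
  integrableOn_Ioi_deriv_of_nonneg
    (hasDerivAt_neg_exp_neg_sq_div_two_div hx.ne').continuousAt.continuousWithinAt
    (fun _ ht => hasDerivAt_neg_exp_neg_sq_div_two_div (hx.trans ht).ne')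
    (fun _ _ => by positivity) (tendsto_neg_exp_neg_sq_div_two.div_atTop tendsto_id)

lemma integral_Ioi_exp_neg_sq_div_two_add_div_sq (hx : 0 < x) :
    ∫ t in Ioi x, (exp (-(t ^ 2) / 2) + exp (-(t ^ 2) / 2) / t ^ 2) = exp (-(x ^ 2) / 2) / x := by
  rw [integral_Ioi_of_hasDerivAt_of_nonneg
    (hasDerivAt_neg_exp_neg_sq_div_two_div hx.ne').continuousAt.continuousWithinAt
    (fun _ ht => hasDerivAt_neg_exp_neg_sq_div_two_div (hx.trans ht).ne')
    (fun _ _ => by positivity) (tendsto_neg_exp_neg_sq_div_two.div_atTop tendsto_id)]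
  ring

lemma integrableOn_Ioi_exp_neg_sq_div_two_div_sq (hx : 0 < x) :
    IntegrableOn (fun t => exp (-(t ^ 2) / 2) / t ^ 2) (Ioi x) := by
  refine ((integrableOn_Ioi_exp_neg_sq_div_two_add_div_sq hx).sub
    integrable_exp_neg_sq_div_two.integrableOn).congr_fun (fun t _ => ?_) measurableSet_Ioi
  simp only [Pi.sub_apply, add_sub_cancel_left]

lemma gaussTail_le (hx : 0 < x) : gaussTail x ≤ exp (-(x ^ 2) / 2) / x := by
  calc gaussTail x ≤ ∫ t in Ioi x, t * exp (-(t ^ 2) / 2) / x := by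
        refine setIntegral_mono_on integrable_exp_neg_sq_div_two.integrableOn
          ((integrableOn_Ioi_mul_exp_neg_sq_div_two hx).div_const x) measurableSet_Ioi
          fun t (ht : x < t) => ?_
        rw [le_div_iff₀ hx, mul_comm]
        exact mul_le_mul_of_nonneg_right ht.le (exp_pos _).le
    _ = exp (-(x ^ 2) / 2) / x := by rw [integral_div, integral_Ioi_mul_exp_neg_sq_div_two hx]

lemma integral_Ioi_exp_neg_sq_div_two_div_sq_le (hx : 0 < x) :
    ∫ t in Ioi x, exp (-(t ^ 2) / 2) / t ^ 2 ≤ exp (-(x ^ 2) / 2) / x ^ 3 := by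
  calc ∫ t in Ioi x, exp (-(t ^ 2) / 2) / t ^ 2
      ≤ ∫ t in Ioi x, t * exp (-(t ^ 2) / 2) / x ^ 3 := by
        refine setIntegral_mono_on (integrableOn_Ioi_exp_neg_sq_div_two_div_sq hx)
          ((integrableOn_Ioi_mul_exp_neg_sq_div_two hx).div_const _) measurableSet_Ioi
          fun t (ht : x < t) => ?_
        have ht0 : 0 < t := hx.trans ht
        rw [div_le_div_iff₀ (by positivity) (by positivity)]
        have : x ^ 3 ≤ t * t ^ 2 := by rw [← pow_succ']; gcongr
        nlinarith [exp_pos (-(t ^ 2) / 2)]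
    _ = exp (-(x ^ 2) / 2) / x ^ 3 := by
        rw [integral_div, integral_Ioi_mul_exp_neg_sq_div_two hx]

lemma exp_neg_sq_div_two_div_sub_le_gaussTail (hx : 0 < x) :
    exp (-(x ^ 2) / 2) / x - exp (-(x ^ 2) / 2) / x ^ 3 ≤ gaussTail x := by
  have hsplit := integral_Ioi_exp_neg_sq_div_two_add_div_sq hx
  rw [integral_add integrable_exp_neg_sq_div_two.integrableOn
    (integrableOn_Ioi_exp_neg_sq_div_two_div_sq hx)] at hsplit
  rw [gaussTail]
  linarith [integral_Ioi_exp_neg_sq_div_two_div_sq_le hx]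

lemma millsRatio_le (hx : 0 < x) : millsRatio x ≤ 1 / x := by
  have h := gaussTail_le hx
  rw [gaussTail_eq_mul_millsRatio, div_eq_mul_one_div (exp _)] at h
  exact le_of_mul_le_mul_left h (exp_pos _)

lemma one_div_sub_one_div_pow_three_le_millsRatio (hx : 0 < x) :
    1 / x - 1 / x ^ 3 ≤ millsRatio x := by
  have h := exp_neg_sq_div_two_div_sub_le_gaussTail hx
  rw [gaussTail_eq_mul_millsRatio, div_eq_mul_one_div, div_eq_mul_one_div _ (x ^ 3),
    ← mul_sub] at h
  exact le_of_mul_le_mul_left h (exp_pos _)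

end tail

lemma exp_mul_exp_neg_sq_div_two_half_sub {s : ℝ} (hs : s ≠ 0) (k : ℝ) :
    exp (s ^ 2 / 8 - k / 2) * exp (-((s / 2 - k / s) ^ 2) / 2) = exp (-(k ^ 2) / (2 * s ^ 2)) := by
  rw [← exp_add]
  congr 1
  field_simp
  ring

lemma exp_mul_exp_neg_sq_div_two_half_add {s : ℝ} (hs : s ≠ 0) (k : ℝ) :
    exp (s ^ 2 / 8 - k / 2) * (exp k * exp (-((s / 2 + k / s) ^ 2) / 2))
      = exp (-(k ^ 2) / (2 * s ^ 2)) := by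
  rw [← exp_add, ← exp_add]
  congr 1
  field_simp
  ring

section algebra

variable {k s : ℝ}

lemma quarter_le_half_sub_div (hs : 0 < s) (hks : 4 * |k| ≤ s ^ 2) : s / 4 ≤ s / 2 - k / s := by
  have : k / s ≤ s / 4 := by
    rw [div_le_div_iff₀ hs four_pos]
    nlinarith [le_abs_self k]
  linarith

lemma quarter_le_half_add_div (hs : 0 < s) (hks : 4 * |k| ≤ s ^ 2) : s / 4 ≤ s / 2 + k / s := by
  have : -k / s ≤ s / 4 := by
    rw [div_le_div_iff₀ hs four_pos]
    nlinarith [neg_le_abs k]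
  linarith [neg_div s k]

lemma quarter_mul_inv_add_inv (hs : 0 < s) (hks : 2 * |k| < s ^ 2) :
    s / 4 * (1 / (s / 2 - k / s) + 1 / (s / 2 + k / s)) = s ^ 4 / (s ^ 4 - 4 * k ^ 2) := by
  have h₁ : 0 < s ^ 2 - 2 * k := by linarith [le_abs_self k, abs_nonneg k]
  have h₂ : 0 < s ^ 2 + 2 * k := by linarith [neg_le_abs k, abs_nonneg k]
  have e₁ : s / 2 - k / s = (s ^ 2 - 2 * k) / (2 * s) := by field_simp
  have e₂ : s / 2 + k / s = (s ^ 2 + 2 * k) / (2 * s) := by field_simp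
  have e₃ : s ^ 4 - 4 * k ^ 2 = (s ^ 2 - 2 * k) * (s ^ 2 + 2 * k) := by ring
  rw [e₁, e₂, e₃]
  field_simp
  ring

lemma pow_four_div_sub_mem_Icc (hs : 0 < s) (hks : 4 * |k| + 4 ≤ s ^ 2) :
    s ^ 4 / (s ^ 4 - 4 * k ^ 2) ∈ Icc 1 (1 + 2 * k ^ 2 / s ^ 2) := by
  have hk : 4 * k ^ 2 ≤ |k| * s ^ 2 := by
    nlinarith [sq_abs k, abs_nonneg k]
  have hpos : 0 < s ^ 4 - 4 * k ^ 2 := by nlinarith [abs_nonneg k]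
  constructor
  · rw [one_le_div hpos]
    nlinarith [sq_nonneg k]
  · have hD : 2 * s ^ 2 ≤ s ^ 4 - 4 * k ^ 2 := by nlinarith [abs_nonneg k]
    have e : s ^ 4 / (s ^ 4 - 4 * k ^ 2) = 1 + 4 * k ^ 2 / (s ^ 4 - 4 * k ^ 2) := by
      field_simp
      ring
    rw [e, add_le_add_iff_left, div_le_div_iff₀ hpos (by positivity)]
    nlinarith [sq_nonneg k]

lemma quarter_mul_one_div_pow_three_le {a : ℝ} (hs : 0 < s) (ha : s / 4 ≤ a) :
    s / 4 * (1 / a ^ 3) ≤ 16 / s ^ 2 := by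
  have ha₀ : 0 < a := lt_of_lt_of_le (by positivity) ha
  have : (s / 4) ^ 3 ≤ a ^ 3 := by gcongr
  rw [mul_one_div, div_le_div_iff₀ (by positivity) (by positivity)]
  nlinarith

end algebra

lemma gaussTail_add_exp_mul_gaussTail_mul {s : ℝ} (hs : s ≠ 0) (k : ℝ) :
    (gaussTail (s / 2 - k / s) + exp k * gaussTail (s / 2 + k / s)) * (s / 4)
        * exp (s ^ 2 / 8 - k / 2)
      = exp (-(k ^ 2) / (2 * s ^ 2))
        * (s / 4 * (millsRatio (s / 2 - k / s) + millsRatio (s / 2 + k / s))) := by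
  rw [gaussTail_eq_mul_millsRatio, gaussTail_eq_mul_millsRatio]
  linear_combination
    (s / 4 * millsRatio (s / 2 - k / s)) * exp_mul_exp_neg_sq_div_two_half_sub hs k
      + (s / 4 * millsRatio (s / 2 + k / s)) * exp_mul_exp_neg_sq_div_two_half_add hs k

lemma quarter_mul_millsRatio_add_mem_Icc {k s : ℝ} (hs : 0 < s) (hks : 4 * |k| + 4 ≤ s ^ 2) :
    s / 4 * (millsRatio (s / 2 - k / s) + millsRatio (s / 2 + k / s))
      ∈ Icc (s ^ 4 / (s ^ 4 - 4 * k ^ 2) - 32 / s ^ 2) (s ^ 4 / (s ^ 4 - 4 * k ^ 2)) := by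
  set a := s / 2 - k / s
  set b := s / 2 + k / s
  have ha : s / 4 ≤ a := quarter_le_half_sub_div hs (by linarith)
  have hb : s / 4 ≤ b := quarter_le_half_add_div hs (by linarith)
  have ha₀ : 0 < a := lt_of_lt_of_le (by positivity) ha
  have hb₀ : 0 < b := lt_of_lt_of_le (by positivity) hb
  rw [← quarter_mul_inv_add_inv hs (by linarith [abs_nonneg k])]
  constructor
  · have h₁ := quarter_mul_one_div_pow_three_le hs ha
    have h₂ := quarter_mul_one_div_pow_three_le hs hb
    calc s / 4 * (1 / a + 1 / b) - 32 / s ^ 2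
        ≤ s / 4 * (1 / a + 1 / b) - (s / 4 * (1 / a ^ 3) + s / 4 * (1 / b ^ 3)) := by
          linarith [show (32 : ℝ) / s ^ 2 = 16 / s ^ 2 + 16 / s ^ 2 by ring]
      _ = s / 4 * ((1 / a - 1 / a ^ 3) + (1 / b - 1 / b ^ 3)) := by ring
      _ ≤ s / 4 * (millsRatio a + millsRatio b) := by
          gcongr
          · exact one_div_sub_one_div_pow_three_le_millsRatio ha₀
          · exact one_div_sub_one_div_pow_three_le_millsRatio hb₀
  · gcongr
    · exact millsRatio_le ha₀
    · exact millsRatio_le hb₀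

lemma abs_exp_mul_quarter_mul_millsRatio_sub_one_le {k s : ℝ} (hs : 0 < s)
    (hks : 4 * |k| + 4 ≤ s ^ 2) :
    |exp (-(k ^ 2) / (2 * s ^ 2))
        * (s / 4 * (millsRatio (s / 2 - k / s) + millsRatio (s / 2 + k / s))) - 1|
      ≤ (2 * k ^ 2 + 32) / s ^ 2 := by
  set u := exp (-(k ^ 2) / (2 * s ^ 2))
  set S := s ^ 4 / (s ^ 4 - 4 * k ^ 2)
  set M := s / 4 * (millsRatio (s / 2 - k / s) + millsRatio (s / 2 + k / s))
  obtain ⟨hM₁, hM₂⟩ := quarter_mul_millsRatio_add_mem_Icc hs hks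
  obtain ⟨hS₁, hS₂⟩ := pow_four_div_sub_mem_Icc hs hks
  have hu₀ : 0 ≤ u := (exp_pos _).le
  have hu₁ : u ≤ 1 := exp_le_one_iff.mpr
    (div_nonpos_of_nonpos_of_nonneg (neg_nonpos.mpr (sq_nonneg k)) (by positivity))
  have hu₂ : 1 - k ^ 2 / (2 * s ^ 2) ≤ u := by
    linarith [add_one_le_exp (-(k ^ 2) / (2 * s ^ 2)), neg_div (2 * s ^ 2) (k ^ 2)]
  have hk : k ^ 2 / (2 * s ^ 2) ≤ 2 * k ^ 2 / s ^ 2 := by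
    rw [div_le_div_iff₀ (by positivity) (by positivity)]
    nlinarith [sq_nonneg k, sq_nonneg s]
  rw [abs_le, add_div]
  constructor
  · have h₁ : u * (S - 32 / s ^ 2) ≤ u * M := mul_le_mul_of_nonneg_left hM₁ hu₀
    have h₂ : u ≤ u * S := le_mul_of_one_le_right hu₀ hS₁
    have h₃ : u * (32 / s ^ 2) ≤ 32 / s ^ 2 := mul_le_of_le_one_left (by positivity) hu₁
    linarith [mul_sub u S (32 / s ^ 2)]
  · have h₁ : u * M ≤ u * S := mul_le_mul_of_nonneg_left hM₂ hu₀
    have h₂ : u * S ≤ S := mul_le_of_le_one_left (by linarith) hu₁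
    have h₃ : 0 ≤ 32 / s ^ 2 := by positivity
    linarith

theorem stmt_3 (y k : ℝ) (hy : 0 < y) :
    ∃ C₀ > (0 : ℝ), ∃ τ₀ > (0 : ℝ), ∀ τ > τ₀,
      |(1 - BS k y τ) * (Real.sqrt (2 * Real.pi * τ * y) / 4)
          * Real.exp (y * τ / 8 - k / 2) - 1| ≤ C₀ / τ := by
  refine ⟨(2 * k ^ 2 + 32) / y, by positivity, (4 * |k| + 4) / y, by positivity,
    fun τ hτ => ?_⟩
  have hyτ : 4 * |k| + 4 < y * τ := (div_lt_iff₀' hy).mp hτ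
  rw [one_sub_BS]
  set s := √(y * τ)
  have hs₀ : 0 < s := sqrt_pos.mpr (by linarith [abs_nonneg k])
  have hs : s ^ 2 = y * τ := sq_sqrt (by linarith [abs_nonneg k])
  have hsqrt : √(2 * π * τ * y) = √(2 * π) * s := by
    rw [← sqrt_mul (by positivity)]
    ring_nf
  rw [hsqrt, ← hs]
  calc _ = |(gaussTail (s / 2 - k / s) + exp k * gaussTail (s / 2 + k / s)) * (s / 4)
        * exp (s ^ 2 / 8 - k / 2) - 1| := by field_simp
    _ ≤ (2 * k ^ 2 + 32) / s ^ 2 := by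
        rw [gaussTail_add_exp_mul_gaussTail_mul hs₀.ne']
        exact abs_exp_mul_quarter_mul_millsRatio_sub_one_le hs₀ (by linarith)
    _ = (2 * k ^ 2 + 32) / y / τ := by rw [hs, div_div]
end

section
/- Let V be a nonnegative random variable with E[√V] < ∞ and P(V = 0) < 1. Suppose σ : (0, τ₀) → [0,∞) satisfies Φ(σ(τ)·√τ/2) = E[Φ(√(V·τ)/2)] for all τ ∈ (0, τ₀) (this is exactly the at-the-money implied volatility equation BS(0, σ(τ)², τ) = E[BS(0, V, τ)]). Then lim_{τ→0⁺} σ(τ) = E[√V]. -/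
/-!
On `[0, x]` the standard Gaussian density lies between `e^{-x²/2}/√(2π)` and `1/√(2π)`, so
`x e^{-x²/2} ≤ √(2π) (Φ x - 1/2) ≤ x` for `x ≥ 0`. Put `X = √V`, `t = √τ/2` and `s = σ(τ) t`,
so that `Φ s = E[Φ(t X)]`. Applying these bounds to `Φ s` and inside the expectation gives
`√(2π) (Φ s - 1/2) ≤ t E[X]`, which forces `s → 0`, and after division by `t`
`E[X e^{-(tX)²/2}] ≤ σ(τ) ≤ e^{s²/2} E[X]`. Both bounds tend to `E[X]`, the lower one by
dominated convergence.
-/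

open MeasureTheory

open ProbabilityTheory Filter Topology Set Real

lemma gaussianPDFReal_zero_one (s : ℝ) :
    gaussianPDFReal 0 1 s = exp (-(s ^ 2) / 2) / √(2 * π) := by
  simp [gaussianPDFReal, div_eq_inv_mul]

lemma Phi_eq_integral_gaussianPDFReal (x : ℝ) : Phi x = ∫ s in Iic x, gaussianPDFReal 0 1 s := by
  simp only [Phi, gaussianPDFReal_zero_one]

lemma Phi_sub_Phi (a b : ℝ) : Phi b - Phi a = ∫ s in a..b, gaussianPDFReal 0 1 s := by
  simp only [Phi_eq_integral_gaussianPDFReal]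
  exact intervalIntegral.integral_Iic_sub_Iic (integrable_gaussianPDFReal 0 1).integrableOn
    (integrable_gaussianPDFReal 0 1).integrableOn

lemma Phi_zero : Phi 0 = 1 / 2 := by
  have hsymm : ∫ s in Iic (0 : ℝ), gaussianPDFReal 0 1 s
      = ∫ s in Ioi (0 : ℝ), gaussianPDFReal 0 1 s := by
    simpa [gaussianPDFReal] using integral_comp_neg_Iic (0 : ℝ) (gaussianPDFReal 0 1)
  have htotal := integral_gaussianPDFReal_eq_one (0 : ℝ) one_ne_zero
  rw [← setIntegral_univ, ← Iic_union_Ioi (a := (0 : ℝ)),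
    setIntegral_union (Iic_disjoint_Ioi le_rfl) measurableSet_Ioi
      (integrable_gaussianPDFReal 0 1).integrableOn (integrable_gaussianPDFReal 0 1).integrableOn,
    ← hsymm] at htotal
  rw [Phi_eq_integral_gaussianPDFReal]
  linarith

lemma Phi_sub_half (x : ℝ) : Phi x - 1 / 2 = ∫ s in (0)..x, gaussianPDFReal 0 1 s := by
  rw [← Phi_zero, Phi_sub_Phi]

lemma monotone_Phi : Monotone Phi := fun a b hab => by
  have := intervalIntegral.integral_nonneg (μ := volume) hab
    fun s _ => gaussianPDFReal_nonneg 0 1 s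
  linarith [Phi_sub_Phi a b]

lemma Phi_nonneg (x : ℝ) : 0 ≤ Phi x :=
  setIntegral_nonneg measurableSet_Iic fun s _ => by positivity

lemma Phi_le_one (x : ℝ) : Phi x ≤ 1 := by
  rw [← integral_gaussianPDFReal_eq_one 0 one_ne_zero, Phi_eq_integral_gaussianPDFReal]
  exact setIntegral_le_integral (integrable_gaussianPDFReal 0 1)
    (Eventually.of_forall fun s => gaussianPDFReal_nonneg 0 1 s)

lemma Phi_sub_half_le {x : ℝ} (hx : 0 ≤ x) : Phi x - 1 / 2 ≤ x / √(2 * π) := by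
  have hbound : ∀ s, gaussianPDFReal 0 1 s ≤ 1 / √(2 * π) := fun s => by
    rw [gaussianPDFReal_zero_one]
    gcongr
    exact exp_le_one_iff.2 (by nlinarith [sq_nonneg s])
  calc Phi x - 1 / 2 = ∫ s in (0)..x, gaussianPDFReal 0 1 s := Phi_sub_half x
    _ ≤ ∫ s in (0)..x, 1 / √(2 * π) :=
      intervalIntegral.integral_mono_on hx (integrable_gaussianPDFReal 0 1).intervalIntegrable
        intervalIntegrable_const fun s _ => hbound s
    _ = x / √(2 * π) := by
      rw [intervalIntegral.integral_const, smul_eq_mul, sub_zero, mul_one_div]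

lemma le_Phi_sub_half {x : ℝ} (hx : 0 ≤ x) :
    x * exp (-(x ^ 2 / 2)) / √(2 * π) ≤ Phi x - 1 / 2 := by
  have hbound : ∀ s ∈ Icc 0 x, exp (-(x ^ 2 / 2)) / √(2 * π) ≤ gaussianPDFReal 0 1 s := by
    intro s hs
    rw [gaussianPDFReal_zero_one]
    gcongr
    nlinarith [hs.1, hs.2]
  calc x * exp (-(x ^ 2 / 2)) / √(2 * π)
        = ∫ s in (0)..x, exp (-(x ^ 2 / 2)) / √(2 * π) := by simp [mul_div_assoc]
    _ ≤ ∫ s in (0)..x, gaussianPDFReal 0 1 s :=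
      intervalIntegral.integral_mono_on hx intervalIntegrable_const
        (integrable_gaussianPDFReal 0 1).intervalIntegrable hbound
    _ = Phi x - 1 / 2 := (Phi_sub_half x).symm

section Expectation

variable {Ω : Type*} [MeasurableSpace Ω] {μ : Measure Ω}

lemma integrable_Phi_comp [IsFiniteMeasure μ] {g : Ω → ℝ} (hg : AEMeasurable g μ) :
    Integrable (fun ω => Phi (g ω)) μ :=
  Integrable.of_bound (monotone_Phi.measurable.comp_aemeasurable hg).aestronglyMeasurable 1
    (Eventually.of_forall fun ω => by
      rw [norm_of_nonneg (Phi_nonneg _)]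
      exact Phi_le_one _)

lemma integral_Phi_comp_sub_half [IsProbabilityMeasure μ] {g : Ω → ℝ} (hg : AEMeasurable g μ) :
    ∫ ω, (Phi (g ω) - 1 / 2) ∂μ = ∫ ω, Phi (g ω) ∂μ - 1 / 2 := by
  rw [integral_sub (integrable_Phi_comp hg) (integrable_const _), integral_const, probReal_univ,
    one_smul]

lemma tendsto_integral_mul_exp_neg_mul_sq {X : Ω → ℝ} (hX : Integrable X μ) :
    Tendsto (fun t => ∫ ω, X ω * exp (-((t * X ω) ^ 2 / 2)) ∂μ) (𝓝 0) (𝓝 (∫ ω, X ω ∂μ)) := by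
  refine tendsto_integral_filter_of_dominated_convergence (fun ω => ‖X ω‖)
    (Eventually.of_forall fun t => ?_) (Eventually.of_forall fun t => ?_) hX.norm ?_
  · exact (hX.aestronglyMeasurable.aemeasurable.mul (by fun_prop)).aestronglyMeasurable
  · refine Eventually.of_forall fun ω => ?_
    rw [norm_mul, norm_of_nonneg (exp_pos _).le]
    exact mul_le_of_le_one_right (norm_nonneg _)
      (exp_le_one_iff.2 (by nlinarith [sq_nonneg (t * X ω)]))
  · refine Eventually.of_forall fun ω => ?_
    simpa using ((by fun_prop : Continuous fun t : ℝ => X ω * exp (-((t * X ω) ^ 2 / 2))).tendsto 0)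

variable [IsProbabilityMeasure μ] {X : Ω → ℝ} {t f : ℝ}

lemma integral_Phi_mul_sub_half_le (hX0 : 0 ≤ᵐ[μ] X) (hX : Integrable X μ) (ht : 0 ≤ t) :
    ∫ ω, Phi (t * X ω) ∂μ - 1 / 2 ≤ t * (∫ ω, X ω ∂μ) / √(2 * π) := by
  rw [← integral_Phi_comp_sub_half (hX.aestronglyMeasurable.aemeasurable.const_mul t),
    ← integral_const_mul, ← integral_div]
  refine integral_mono_ae
    ((integrable_Phi_comp (hX.aestronglyMeasurable.aemeasurable.const_mul t)).sub
      (integrable_const _)) ((hX.const_mul t).div_const _) ?_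
  filter_upwards [hX0] with ω hω
  exact Phi_sub_half_le (mul_nonneg ht hω)

lemma le_integral_Phi_mul_sub_half (hX0 : 0 ≤ᵐ[μ] X) (hX : AEMeasurable X μ) (ht : 0 ≤ t) :
    t * (∫ ω, X ω * exp (-((t * X ω) ^ 2 / 2)) ∂μ) / √(2 * π) ≤ ∫ ω, Phi (t * X ω) ∂μ - 1 / 2 := by
  rw [← integral_Phi_comp_sub_half (hX.const_mul t), ← integral_const_mul, ← integral_div]
  refine integral_mono_of_nonneg ?_ ((integrable_Phi_comp (hX.const_mul t)).sub
    (integrable_const _)) ?_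
  · filter_upwards [hX0] with ω (hω : 0 ≤ X ω)
    positivity
  · filter_upwards [hX0] with ω hω
    simpa only [mul_assoc] using le_Phi_sub_half (mul_nonneg ht hω)

lemma integral_mul_exp_le_of_Phi_mul_eq (hX0 : 0 ≤ᵐ[μ] X) (hX : AEMeasurable X μ) (ht : 0 < t)
    (hf : 0 ≤ f) (heq : Phi (f * t) = ∫ ω, Phi (t * X ω) ∂μ) :
    ∫ ω, X ω * exp (-((t * X ω) ^ 2 / 2)) ∂μ ≤ f := by
  have h := le_integral_Phi_mul_sub_half hX0 hX ht.le
  rw [← heq] at h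
  replace h := h.trans (Phi_sub_half_le (mul_nonneg hf ht.le))
  rw [div_le_div_iff_of_pos_right (by positivity), mul_comm f] at h
  exact le_of_mul_le_mul_left h ht

lemma le_exp_mul_integral_of_Phi_mul_eq (hX0 : 0 ≤ᵐ[μ] X) (hX : Integrable X μ) (ht : 0 < t)
    (hf : 0 ≤ f) (heq : Phi (f * t) = ∫ ω, Phi (t * X ω) ∂μ) :
    f ≤ exp ((f * t) ^ 2 / 2) * ∫ ω, X ω ∂μ := by
  have h := integral_Phi_mul_sub_half_le hX0 hX ht.le
  rw [← heq] at h
  replace h := (le_Phi_sub_half (mul_nonneg hf ht.le)).trans h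
  rw [div_le_div_iff_of_pos_right (by positivity)] at h
  rw [← div_le_iff₀' (exp_pos _), div_eq_mul_inv, ← exp_neg]
  exact le_of_mul_le_mul_left (by linarith) ht

end Expectation

lemma tendsto_zero_of_Phi_sub_half_le {α : Type*} {l : Filter α} {s u : α → ℝ}
    (hs : ∀ᶠ x in l, 0 ≤ s x) (hu : Tendsto u l (𝓝 0)) (h : ∀ᶠ x in l, Phi (s x) - 1 / 2 ≤ u x) :
    Tendsto s l (𝓝 0) := by
  refine tendsto_order.2 ⟨fun b hb => hs.mono fun x hx => hb.trans_le hx, fun b hb => ?_⟩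
  have hPhi_b : 0 < Phi b - 1 / 2 :=
    lt_of_lt_of_le (by positivity) (le_Phi_sub_half hb.le)
  filter_upwards [h, hu.eventually_lt_const hPhi_b] with x hx hux
  by_contra! hbx
  linarith [monotone_Phi hbx]

theorem tendsto_of_Phi_mul_eq_integral_Phi_mul {Ω α : Type*} [MeasurableSpace Ω] {μ : Measure Ω}
    [IsProbabilityMeasure μ] {X : Ω → ℝ} (hX0 : 0 ≤ᵐ[μ] X) (hX : Integrable X μ) {l : Filter α}
    {t f : α → ℝ} (ht : Tendsto t l (𝓝[>] 0))
    (hf : ∀ᶠ x in l, 0 ≤ f x ∧ Phi (f x * t x) = ∫ ω, Phi (t x * X ω) ∂μ) :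
    Tendsto f l (𝓝 (∫ ω, X ω ∂μ)) := by
  have ht0 : Tendsto t l (𝓝 0) := tendsto_nhds_of_tendsto_nhdsWithin ht
  have htpos : ∀ᶠ x in l, 0 < t x := ht self_mem_nhdsWithin
  have hft : Tendsto (fun x => f x * t x) l (𝓝 0) := by
    refine tendsto_zero_of_Phi_sub_half_le
      (u := fun x => t x * (∫ ω, X ω ∂μ) / √(2 * π)) ?_ ?_ ?_
    · filter_upwards [hf, htpos] with x hfx htx using mul_nonneg hfx.1 htx.le
    · simpa using (ht0.mul_const (∫ ω, X ω ∂μ)).div_const (√(2 * π))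
    · filter_upwards [hf, htpos] with x hfx htx
      rw [hfx.2]
      exact integral_Phi_mul_sub_half_le hX0 hX htx.le
  have hlower := (tendsto_integral_mul_exp_neg_mul_sq hX).comp ht0
  have hupper : Tendsto (fun x => exp ((f x * t x) ^ 2 / 2) * ∫ ω, X ω ∂μ) l
      (𝓝 (∫ ω, X ω ∂μ)) := by
    simpa using (((hft.pow 2).div_const 2).rexp).mul_const (∫ ω, X ω ∂μ)
  refine tendsto_of_tendsto_of_tendsto_of_le_of_le' hlower hupper ?_ ?_
  · filter_upwards [hf, htpos] with x hfx htx
    exact integral_mul_exp_le_of_Phi_mul_eq hX0 hX.aemeasurable htx hfx.1 hfx.2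
  · filter_upwards [hf, htpos] with x hfx htx
    exact le_exp_mul_integral_of_Phi_mul_eq hX0 hX htx hfx.1 hfx.2

theorem stmt_15_general {Ω : Type*} [MeasurableSpace Ω] (μ : Measure Ω) [IsProbabilityMeasure μ]
    (V : Ω → ℝ)
    (hint : Integrable (fun ω => Real.sqrt (V ω)) μ)
    (τ₀ : ℝ) (hτ₀ : 0 < τ₀) (σ : ℝ → ℝ)
    (hσ : ∀ τ ∈ Set.Ioo (0 : ℝ) τ₀, 0 ≤ σ τ ∧
      Phi (σ τ * Real.sqrt τ / 2) = ∫ ω, Phi (Real.sqrt (V ω * τ) / 2) ∂μ) :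
    Filter.Tendsto σ (nhdsWithin 0 (Set.Ioi 0)) (nhds (∫ ω, Real.sqrt (V ω) ∂μ)) := by
  have ht : Tendsto (fun τ : ℝ => √τ / 2) (𝓝[>] 0) (𝓝[>] 0) := by
    refine tendsto_nhdsWithin_iff.2 ⟨?_, ?_⟩
    · simpa using ((continuous_sqrt.div_const 2).tendsto 0).mono_left nhdsWithin_le_nhds
    · filter_upwards [self_mem_nhdsWithin] with τ (hτ : 0 < τ)
      exact div_pos (sqrt_pos.2 hτ) two_pos
  refine tendsto_of_Phi_mul_eq_integral_Phi_mul (Eventually.of_forall fun ω => sqrt_nonneg _)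
    hint ht ?_
  filter_upwards [Ioo_mem_nhdsGT hτ₀] with τ hτ
  obtain ⟨hσ0, hσeq⟩ := hσ τ hτ
  refine ⟨hσ0, ?_⟩
  rw [← mul_div_assoc, hσeq]
  congr with ω
  rw [sqrt_mul' _ hτ.1.le, mul_div_assoc, mul_comm]

theorem stmt_15 {Ω : Type*} [MeasurableSpace Ω] (μ : Measure Ω) [IsProbabilityMeasure μ]
    (V : Ω → ℝ) (hV : Measurable V) (hVnn : ∀ ω, 0 ≤ V ω)
    (hint : Integrable (fun ω => Real.sqrt (V ω)) μ)
    (hmass : μ {ω | V ω = 0} < 1)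
    (τ₀ : ℝ) (hτ₀ : 0 < τ₀) (σ : ℝ → ℝ)
    (hσ : ∀ τ ∈ Set.Ioo (0 : ℝ) τ₀, 0 ≤ σ τ ∧
      Phi (σ τ * Real.sqrt τ / 2) = ∫ ω, Phi (Real.sqrt (V ω * τ) / 2) ∂μ) :
    Filter.Tendsto σ (nhdsWithin 0 (Set.Ioi 0)) (nhds (∫ ω, Real.sqrt (V ω) ∂μ)) :=
  stmt_15_general μ V hint τ₀ hτ₀ σ hσ
end
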